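/- Let R be a commutative ring, n a natural number, e : {1,…,n} × {1,…,n} → R a function, and σ an involution of {1,…,n} whose moved set m(σ) has cardinality 2p with p ≥ 1. Then the (finite) sum Σ_{t ≥ 1} Σ_{(σ₁,…,σ_t)} (−1)^t · E_{σ₁}·E_{σ₂}⋯E_{σ_t} = (−1)^p · E_σ, where the inner sum is over all ordered t-tuples (σ₁,…,σ_t) of non-identity involutions of {1,…,n} whose moved sets m(σ₁),…,m(σ_t) are pairwise disjoint and whose composite σ₁∘σ₂∘⋯∘σ_t equals σ. -/

import Mathlib

/-!
A tuple `(σ₁, …, σ_t)` as in the statement is a factorization of `σ` into pairwise disjoint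
nontrivial sub-involutions of `σ`, i.e. involutions agreeing with `σ` wherever they move a point.
Hence `E_{σ₁} ⋯ E_{σ_t} = E_σ`, and the claim becomes `∑_t (-1)^t C_t(σ) = (-1)^p` for the number
`C_t(σ)` of such factorizations; summing from `t = 0`, where `C_0(σ) = [σ = 1]`, this holds for
`p = 0` as well. Sub-involutions `ρ` of `σ` correspond to the subsets of the excedance set
`E = {x | x < σ x}` of `σ` (one point per 2-cycle), and splitting off the first factor gives
`C_{t+1}(σ) = ∑_{ρ ≠ 1} C_t(ρσ)`, where `ρσ` is the complementary sub-involution. By induction on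
`p = |E|` the alternating sum is `[σ = 1] - ∑_{∅ ≠ S ⊆ E} (-1)^{|E \ S|} = (-1)^p`, because
`∑_{S ⊆ E} (-1)^{|E \ S|} = ∏_{x ∈ E} (1 - 1) = [E = ∅]`.
-/

open Finset

/-- For an involution `ρ` of `{1,…,n}` and coefficients `e`, the product
`E_ρ = ∏_{j < ρ(j)} e(j, ρ(j))` (one factor per 2-element orbit of `ρ`). -/
noncomputable def involutionProd {R : Type*} [CommRing R] {n : ℕ}
    (e : Fin n → Fin n → R) (ρ : Equiv.Perm (Fin n)) : R :=
  ∏ j ∈ Finset.univ.filter (fun j => j < ρ j), e j (ρ j)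

namespace Equiv.Perm

open Function

section Basic

variable {α : Type*} {ρ σ : Perm α}

lemma mul_self_eq_one_iff_involutive : ρ * ρ = 1 ↔ Involutive ρ := by
  simp [Perm.ext_iff, Involutive]

lemma mul_mul_cancel_left_of_involutive (hρ : Involutive ρ) (τ : Perm α) : ρ * (ρ * τ) = τ := by
  ext x
  simp [hρ (τ x)]

def IsSubInvolution (ρ σ : Perm α) : Prop :=
  Involutive ρ ∧ ∀ x, ρ x ≠ x → ρ x = σ x

namespace IsSubInvolution

lemma apply_apply_of_apply_eq (hσ : Involutive σ) (h : IsSubInvolution ρ σ) {x : α}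
    (hx : ρ x = x) : ρ (σ x) = σ x := by
  by_contra hne
  have hσx : σ x = x := by
    rw [← h.1 (σ x), h.2 _ hne, hσ x, hx]
  exact hne (by rw [hσx, hx])

lemma mul_apply_of_apply_ne (h : IsSubInvolution ρ σ) {x : α} (hx : ρ x ≠ x) :
    (ρ * σ) x = x := by
  rw [Perm.mul_apply, ← h.2 x hx, h.1 x]

lemma mul (hσ : Involutive σ) (h : IsSubInvolution ρ σ) : IsSubInvolution (ρ * σ) σ := by
  refine ⟨fun x => ?_, fun x hx => ?_⟩
  · by_cases hx : ρ x = x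
    · have hρσx : (ρ * σ) x = σ x := h.apply_apply_of_apply_eq hσ hx
      rw [hρσx, Perm.mul_apply, hσ x, hx]
    · rw [h.mul_apply_of_apply_ne hx, h.mul_apply_of_apply_ne hx]
  · by_cases hρx : ρ x = x
    · exact h.apply_apply_of_apply_eq hσ hρx
    · exact absurd (h.mul_apply_of_apply_ne hρx) hx

lemma disjoint_mul (h : IsSubInvolution ρ σ) : Disjoint ρ (ρ * σ) := fun x =>
  (em (ρ x = x)).imp_right h.mul_apply_of_apply_ne

end IsSubInvolution

def IsDisjointFactorization (σ : Perm α) {t : ℕ} (f : Fin t → Perm α) : Prop :=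
  (∀ i, f i * f i = 1 ∧ f i ≠ 1) ∧ (∀ i j, i ≠ j → ∀ x, f i x ≠ x → f j x = x) ∧
    (List.ofFn f).prod = σ

lemma IsDisjointFactorization.involutive {t : ℕ} {f : Fin t → Perm α}
    (hf : IsDisjointFactorization σ f) (i : Fin t) : Involutive (f i) :=
  mul_self_eq_one_iff_involutive.1 (hf.1 i).1

lemma IsDisjointFactorization.pairwise_disjoint {t : ℕ} {f : Fin t → Perm α}
    (hf : IsDisjointFactorization σ f) : (List.ofFn f).Pairwise Disjoint :=
  List.pairwise_ofFn.2 fun i j hij x => (em (f i x = x)).imp_right (hf.2.1 i j hij.ne x)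

end Basic

section Restrict

variable {α : Type*} [DecidableEq α] {σ : Perm α}

lemma involutive_restrictPairs (hσ : Involutive σ) (S : Finset α) :
    Involutive fun x => if x ∈ S ∨ σ x ∈ S then σ x else x := by
  intro x
  by_cases hx : x ∈ S ∨ σ x ∈ S
  · have hσx : σ x ∈ S ∨ σ (σ x) ∈ S := by rw [hσ x]; exact hx.symm
    dsimp only
    rw [if_pos hx, if_pos hσx, hσ x]
  · simp only [if_neg hx]

def restrictPairs (σ : Perm α) (hσ : Involutive σ) (S : Finset α) : Perm α :=
  (involutive_restrictPairs hσ S).toPerm _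

lemma restrictPairs_apply (hσ : Involutive σ) (S : Finset α) (x : α) :
    restrictPairs σ hσ S x = if x ∈ S ∨ σ x ∈ S then σ x else x :=
  rfl

lemma isSubInvolution_restrictPairs (hσ : Involutive σ) (S : Finset α) :
    IsSubInvolution (restrictPairs σ hσ S) σ := by
  refine ⟨involutive_restrictPairs hσ S, fun x hx => ?_⟩
  rw [restrictPairs_apply] at hx ⊢
  split_ifs at hx ⊢ with h
  · rfl
  · exact absurd rfl hx

end Restrict

section Finite

variable {α : Type*} [Fintype α] [LinearOrder α] {ρ σ : Perm α}

def excedances (ρ : Perm α) : Finset α := {x | x < ρ x}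

@[simp]
lemma mem_excedances {x : α} : x ∈ excedances ρ ↔ x < ρ x := by
  simp [excedances]

lemma mem_excedances_or_apply_mem (hρ : Involutive ρ) {x : α} (hx : ρ x ≠ x) :
    x ∈ excedances ρ ∨ ρ x ∈ excedances ρ := by
  rw [mem_excedances, mem_excedances, hρ x]
  exact hx.symm.lt_or_gt

lemma excedances_eq_empty_iff (hρ : Involutive ρ) : excedances ρ = ∅ ↔ ρ = 1 := by
  refine ⟨fun h => Perm.ext fun x => by_contra fun hx => ?_, fun h => by simp [h, excedances]⟩
  rcases mem_excedances_or_apply_mem hρ hx with hx | hx <;> simp [h] at hx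

lemma excedances_nonempty (hρ : Involutive ρ) (hρ1 : ρ ≠ 1) : (excedances ρ).Nonempty :=
  nonempty_iff_ne_empty.2 <| (excedances_eq_empty_iff hρ).not.2 hρ1

lemma card_support_eq_two_mul_card_excedances (hρ : Involutive ρ) :
    #ρ.support = 2 * #(excedances ρ) := by
  have hunion : ρ.support = excedances ρ ∪ (excedances ρ).map ρ.toEmbedding := by
    ext x
    simp only [mem_support, mem_union, mem_excedances, mem_map, coe_toEmbedding]
    constructor
    · intro hx
      refine hx.symm.lt_or_gt.imp_right fun hlt => ⟨ρ x, ?_, hρ x⟩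
      rwa [hρ x]
    · rintro (hx | ⟨a, ha, rfl⟩)
      · exact hx.ne'
      · rw [hρ a]
        exact ha.ne
  have hdisj : _root_.Disjoint (excedances ρ) ((excedances ρ).map ρ.toEmbedding) := by
    simp only [disjoint_left, mem_map, mem_excedances, coe_toEmbedding]
    rintro _ hx ⟨a, ha, rfl⟩
    rw [hρ a] at hx
    exact hx.asymm ha
  rw [hunion, card_union_of_disjoint hdisj, card_map, two_mul]

lemma IsSubInvolution.excedances_subset (h : IsSubInvolution ρ σ) :
    excedances ρ ⊆ excedances σ := fun x hx => by
  rw [mem_excedances] at hx ⊢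
  rwa [← h.2 x hx.ne']

lemma IsSubInvolution.excedances_mul (hσ : Involutive σ) (h : IsSubInvolution ρ σ) :
    excedances (ρ * σ) = excedances σ \ excedances ρ := by
  ext x
  simp only [mem_sdiff, mem_excedances]
  by_cases hx : ρ x = x
  · simp [h.apply_apply_of_apply_eq hσ hx, hx]
  · simp [h.mul_apply_of_apply_ne hx, h.2 x hx]

lemma IsSubInvolution.card_excedances_mul_lt (hσ : Involutive σ) (h : IsSubInvolution ρ σ)
    (hρ : ρ ≠ 1) : #(excedances (ρ * σ)) < #(excedances σ) := by
  rw [h.excedances_mul hσ, card_sdiff_of_subset h.excedances_subset]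
  have := card_le_card h.excedances_subset
  have := card_pos.2 (excedances_nonempty h.1 hρ)
  omega

lemma excedances_restrictPairs (hσ : Involutive σ) {S : Finset α} (hS : S ⊆ excedances σ) :
    excedances (restrictPairs σ hσ S) = S := by
  ext x
  rw [mem_excedances, restrictPairs_apply]
  constructor
  · intro hx
    split_ifs at hx with h
    · refine h.resolve_right fun hσx => ?_
      have := mem_excedances.1 (hS hσx)
      rw [hσ x] at this
      exact hx.asymm this
    · exact absurd hx (lt_irrefl x)
  · intro hx
    rw [if_pos (Or.inl hx)]
    exact mem_excedances.1 (hS hx)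

lemma IsSubInvolution.restrictPairs_excedances (hσ : Involutive σ) (h : IsSubInvolution ρ σ) :
    restrictPairs σ hσ (excedances ρ) = ρ := by
  ext x
  rw [restrictPairs_apply]
  by_cases hx : ρ x = x
  · rw [if_neg, hx]
    simp [hx, h.apply_apply_of_apply_eq hσ hx]
  · rw [if_pos (h.2 x hx ▸ mem_excedances_or_apply_mem h.1 hx), h.2 x hx]

open scoped Classical in
noncomputable def subInvolutions (σ : Perm α) : Finset (Perm α) :=
  {ρ | IsSubInvolution ρ σ}

@[simp]
lemma mem_subInvolutions : ρ ∈ subInvolutions σ ↔ IsSubInvolution ρ σ := by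
  simp [subInvolutions]

lemma sum_subInvolutions_excedances {M : Type*} [AddCommMonoid M] (hσ : Involutive σ)
    (g : Finset α → M) :
    ∑ ρ ∈ subInvolutions σ, g (excedances ρ) = ∑ S ∈ (excedances σ).powerset, g S :=
  sum_nbij' excedances (restrictPairs σ hσ)
    (fun _ hρ => mem_powerset.2 (mem_subInvolutions.1 hρ).excedances_subset)
    (fun S _ => mem_subInvolutions.2 (isSubInvolution_restrictPairs hσ S))
    (fun _ hρ => (mem_subInvolutions.1 hρ).restrictPairs_excedances hσ)
    (fun _ hS => excedances_restrictPairs hσ (mem_powerset.1 hS))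
    (fun _ _ => rfl)

lemma sum_subInvolutions_neg_one_pow (hσ : Involutive σ) :
    ∑ ρ ∈ subInvolutions σ, (-1 : ℤ) ^ #(excedances (ρ * σ)) = if σ = 1 then 1 else 0 := by
  calc ∑ ρ ∈ subInvolutions σ, (-1 : ℤ) ^ #(excedances (ρ * σ))
      = ∑ ρ ∈ subInvolutions σ, (-1 : ℤ) ^ #(excedances σ \ excedances ρ) :=
        sum_congr rfl fun ρ hρ => by rw [(mem_subInvolutions.1 hρ).excedances_mul hσ]
    _ = ∑ S ∈ (excedances σ).powerset, (∏ _x ∈ S, 1) * ∏ _x ∈ excedances σ \ S, (-1 : ℤ) := by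
        rw [sum_subInvolutions_excedances hσ (fun S => (-1 : ℤ) ^ #(excedances σ \ S))]
        simp
    _ = ∏ _x ∈ excedances σ, (1 + -1 : ℤ) := (prod_add _ _ _).symm
    _ = if σ = 1 then 1 else 0 := by
        simp only [add_neg_cancel, prod_const, zero_pow_eq, card_eq_zero,
          excedances_eq_empty_iff hσ]

namespace IsDisjointFactorization

variable {t : ℕ} {f : Fin t → Perm α}

lemma apply_eq_of_apply_ne (hf : IsDisjointFactorization σ f) {i : Fin t} {x : α}
    (hx : f i x ≠ x) : σ x = f i x := by
  rw [← hf.2.2]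
  exact (eq_on_support_mem_disjoint (List.mem_ofFn.2 ⟨i, rfl⟩) hf.pairwise_disjoint x
    (mem_support.2 hx)).symm

lemma exists_apply_ne (hf : IsDisjointFactorization σ f) {x : α} (hx : σ x ≠ x) :
    ∃ i, f i x ≠ x := by
  rw [← hf.2.2, ← mem_support] at hx
  obtain ⟨_, hmem, hx⟩ := exists_mem_support_of_mem_support_prod hx
  obtain ⟨i, rfl⟩ := List.mem_ofFn.1 hmem
  exact ⟨i, mem_support.1 hx⟩

lemma isSubInvolution (hf : IsDisjointFactorization σ f) (i : Fin t) :
    IsSubInvolution (f i) σ :=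
  ⟨hf.involutive i, fun _ hx => (hf.apply_eq_of_apply_ne hx).symm⟩

lemma excedances_eq_biUnion (hf : IsDisjointFactorization σ f) :
    excedances σ = univ.biUnion fun i => excedances (f i) := by
  ext x
  simp only [mem_excedances, mem_biUnion, mem_univ, true_and]
  constructor
  · intro hx
    obtain ⟨i, hi⟩ := hf.exists_apply_ne hx.ne'
    exact ⟨i, hf.apply_eq_of_apply_ne hi ▸ hx⟩
  · rintro ⟨i, hi⟩
    rwa [hf.apply_eq_of_apply_ne hi.ne']

lemma pairwiseDisjoint_excedances (hf : IsDisjointFactorization σ f) :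
    (↑(univ : Finset (Fin t)) : Set (Fin t)).PairwiseDisjoint fun i => excedances (f i) := by
  intro i _ j _ hij
  simp only [Function.onFun, disjoint_left, mem_excedances]
  intro x hi hj
  rw [hf.2.1 i j hij x hi.ne'] at hj
  exact lt_irrefl x hj

lemma prod_prod_excedances {M : Type*} [CommMonoid M] (hf : IsDisjointFactorization σ f)
    (g : α → α → M) :
    ∏ i, ∏ x ∈ excedances (f i), g x (f i x) = ∏ x ∈ excedances σ, g x (σ x) := by
  rw [hf.excedances_eq_biUnion, prod_biUnion hf.pairwiseDisjoint_excedances]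
  refine prod_congr rfl fun i _ => prod_congr rfl fun x hx => ?_
  rw [hf.apply_eq_of_apply_ne (mem_excedances.1 hx).ne']

lemma le_card_excedances (hf : IsDisjointFactorization σ f) : t ≤ #(excedances σ) := by
  rw [hf.excedances_eq_biUnion, card_biUnion hf.pairwiseDisjoint_excedances]
  calc t = ∑ _i : Fin t, 1 := by simp
    _ ≤ _ := sum_le_sum fun i _ => card_pos.2 (excedances_nonempty (hf.involutive i) (hf.1 i).2)

lemma cons_iff (hρ : IsSubInvolution ρ σ) (hρ1 : ρ ≠ 1) {g : Fin t → Perm α} :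
    IsDisjointFactorization σ (Fin.cons ρ g) ↔ IsDisjointFactorization (ρ * σ) g := by
  have hprod : (List.ofFn (Fin.cons ρ g)).prod = ρ * (List.ofFn g).prod := by
    rw [List.ofFn_cons, List.prod_cons]
  constructor
  · rintro ⟨hinv, hdisj, hσ⟩
    refine ⟨fun i => by simpa using hinv i.succ,
      fun i j hij => by simpa using hdisj i.succ j.succ (by simpa using hij), ?_⟩
    rw [← hσ, hprod, mul_mul_cancel_left_of_involutive hρ.1]
  · intro hg
    have hdisj : ∀ k, Disjoint ρ (g k) := fun k =>
      hρ.disjoint_mul.mono le_rfl <| hg.2.2 ▸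
        support_le_prod_of_mem (List.mem_ofFn.2 ⟨k, rfl⟩) hg.pairwise_disjoint
    refine ⟨fun i => ?_, fun i j hij x hx => ?_, ?_⟩
    · cases i using Fin.cases
      · simpa [mul_self_eq_one_iff_involutive] using ⟨hρ.1, hρ1⟩
      · simpa using hg.1 _
    · cases i using Fin.cases <;> cases j using Fin.cases
      · exact absurd rfl hij
      · simp only [Fin.cons_zero, Fin.cons_succ] at hx ⊢
        exact (hdisj _ x).resolve_left hx
      · simp only [Fin.cons_zero, Fin.cons_succ] at hx ⊢
        exact (hdisj _ x).resolve_right hx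
      · simp only [Fin.cons_succ] at hx ⊢
        exact hg.2.1 _ _ (by simpa using hij) x hx
    · rw [hprod, hg.2.2, mul_mul_cancel_left_of_involutive hρ.1]

end IsDisjointFactorization

open scoped Classical in
noncomputable def factorizations (σ : Perm α) (t : ℕ) : Finset (Fin t → Perm α) :=
  {f | IsDisjointFactorization σ f}

@[simp]
lemma mem_factorizations {t : ℕ} {f : Fin t → Perm α} :
    f ∈ factorizations σ t ↔ IsDisjointFactorization σ f := by
  simp [factorizations]

lemma card_factorizations_zero : #(factorizations σ 0) = if σ = 1 then 1 else 0 := by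
  classical
  rw [factorizations, card_filter, univ_unique, sum_singleton]
  simp [IsDisjointFactorization, eq_comm]

lemma card_factorizations_eq_zero {t : ℕ} (ht : #(excedances σ) < t) :
    #(factorizations σ t) = 0 :=
  card_eq_zero.2 <| eq_empty_of_forall_notMem fun _ hf =>
    (mem_factorizations.1 hf).le_card_excedances.not_gt ht

lemma card_factorizations_succ (t : ℕ) :
    #(factorizations σ (t + 1)) =
      ∑ ρ ∈ (subInvolutions σ).erase 1, #(factorizations (ρ * σ) t) := by
  rw [card_eq_sum_card_fiberwise (f := fun f => f 0) fun f hf =>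
    have hf := mem_factorizations.1 hf
    mem_erase.2 ⟨(hf.1 0).2, mem_subInvolutions.2 (hf.isSubInvolution 0)⟩]
  refine sum_congr rfl fun ρ hρ => ?_
  obtain ⟨hρ1, hρ⟩ := mem_erase.1 hρ
  have hcons (g : Fin t → Perm α) :=
    IsDisjointFactorization.cons_iff (g := g) (mem_subInvolutions.1 hρ) hρ1
  refine card_nbij' Fin.tail (Fin.cons (α := fun _ => Perm α) ρ) (fun f hf => ?_)
    (fun g hg => ?_) (fun f hf => ?_) (fun g _ => Fin.tail_cons _ _)
  · obtain ⟨hfσ, rfl⟩ := mem_filter.1 hf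
    rw [mem_coe, mem_factorizations, ← hcons, Fin.cons_self_tail]
    exact mem_factorizations.1 hfσ
  · exact mem_filter.2 ⟨mem_factorizations.2 ((hcons g).2 (mem_factorizations.1 hg)), rfl⟩
  · rw [← (mem_filter.1 hf).2]
    exact Fin.cons_self_tail f

theorem sum_range_neg_one_pow_mul_card_factorizations (hσ : Involutive σ) {N : ℕ}
    (hN : #(excedances σ) < N) :
    ∑ t ∈ range N, (-1 : ℤ) ^ t * #(factorizations σ t) = (-1) ^ #(excedances σ) := by
  induction hp : #(excedances σ) using Nat.strong_induction_on generalizing σ N with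
  | _ p ih =>
  obtain ⟨M, rfl⟩ := Nat.exists_eq_add_one_of_ne_zero (by omega : N ≠ 0)
  have hmul : ∀ ρ ∈ (subInvolutions σ).erase 1,
      ∑ t ∈ range M, (-1 : ℤ) ^ t * #(factorizations (ρ * σ) t) =
        (-1) ^ #(excedances (ρ * σ)) := by
    intro ρ hρ
    obtain ⟨hρ1, hρ⟩ := mem_erase.1 hρ
    have hlt := (mem_subInvolutions.1 hρ).card_excedances_mul_lt hσ hρ1
    exact ih _ (hp ▸ hlt) ((mem_subInvolutions.1 hρ).mul hσ).1 (by omega) rfl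
  have hone : (1 : Perm α) ∈ subInvolutions σ :=
    mem_subInvolutions.2 ⟨fun _ => rfl, fun _ hx => absurd rfl hx⟩
  calc ∑ t ∈ range (M + 1), (-1 : ℤ) ^ t * #(factorizations σ t)
      = -∑ ρ ∈ (subInvolutions σ).erase 1,
          ∑ t ∈ range M, (-1 : ℤ) ^ t * #(factorizations (ρ * σ) t) +
        if σ = 1 then 1 else 0 := by
        simp only [sum_range_succ', card_factorizations_succ, card_factorizations_zero,
          Nat.cast_sum, mul_sum, pow_succ]
        rw [sum_comm]
        simp [sum_neg_distrib]
    _ = -∑ ρ ∈ (subInvolutions σ).erase 1, (-1 : ℤ) ^ #(excedances (ρ * σ)) +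
        if σ = 1 then 1 else 0 := by
        rw [sum_congr rfl hmul]
    _ = (-1) ^ p := by
        rw [sum_erase_eq_sub hone, sum_subInvolutions_neg_one_pow hσ, one_mul, hp]
        ring

end Finite

end Equiv.Perm

open Equiv Perm

lemma Equiv.Perm.IsDisjointFactorization.prod_involutionProd {R : Type*} [CommRing R] {n t : ℕ}
    {σ : Perm (Fin n)} {f : Fin t → Perm (Fin n)} (hf : IsDisjointFactorization σ f)
    (e : Fin n → Fin n → R) : ∏ i, involutionProd e (f i) = involutionProd e σ :=
  hf.prod_prod_excedances e

lemma sum_factorizations_involutionProd {R : Type*} [CommRing R] {n : ℕ}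
    (e : Fin n → Fin n → R) (σ : Perm (Fin n)) (t : ℕ) :
    ∑ f ∈ (univ : Finset (Fin t → Perm (Fin n))).filter
        (fun f => (∀ i, f i * f i = 1 ∧ f i ≠ 1) ∧
          (∀ i j, i ≠ j → ∀ x, f i x ≠ x → f j x = x) ∧ (List.ofFn f).prod = σ),
        (-1 : R) ^ t * ∏ i, involutionProd e (f i) =
      (((-1) ^ t * #(factorizations σ t) : ℤ) : R) * involutionProd e σ := by
  have hfilter : (univ : Finset (Fin t → Perm (Fin n))).filter
      (fun f => (∀ i, f i * f i = 1 ∧ f i ≠ 1) ∧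
        (∀ i j, i ≠ j → ∀ x, f i x ≠ x → f j x = x) ∧ (List.ofFn f).prod = σ) =
      factorizations σ t := by
    ext f
    rw [mem_filter, mem_factorizations]
    exact and_iff_right (mem_univ f)
  rw [hfilter, sum_congr rfl fun f hf => by
    rw [(mem_factorizations.1 hf).prod_involutionProd e], sum_const, nsmul_eq_mul]
  push_cast
  ring

/-- Miyamoto's Lemma: for an involution `σ` whose moved set has cardinality `2p`, `p ≥ 1`,
`Σ_{t ≥ 1} Σ_{(σ₁,…,σ_t)} (−1)^t E_{σ₁}⋯E_{σ_t} = (−1)^p E_σ`, the inner sum being over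
ordered `t`-tuples of non-identity involutions with pairwise disjoint moved sets whose
composite is `σ`. -/
theorem sum_tuples_involutions_eq {R : Type*} [CommRing R] (n p : ℕ) (hp : 1 ≤ p)
    (e : Fin n → Fin n → R) (σ : Equiv.Perm (Fin n)) (hσ : σ * σ = 1)
    (hcard : (Finset.univ.filter (fun i => σ i ≠ i)).card = 2 * p) :
    (∑ᶠ t ∈ Set.Ici (1 : ℕ),
      ∑ f ∈ (Finset.univ : Finset (Fin t → Equiv.Perm (Fin n))).filter
        (fun f => (∀ i, f i * f i = 1 ∧ f i ≠ 1) ∧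
          (∀ i j, i ≠ j → ∀ x, f i x ≠ x → f j x = x) ∧
          (List.ofFn f).prod = σ),
        (-1 : R) ^ t * ∏ i, involutionProd e (f i))
    = (-1 : R) ^ p * involutionProd e σ := by
  have hσ' : Function.Involutive σ := mul_self_eq_one_iff_involutive.1 hσ
  have hexc : #(excedances σ) = p := by
    have := card_support_eq_two_mul_card_excedances hσ'
    change #σ.support = 2 * p at hcard
    omega
  have hσ1 : σ ≠ 1 := fun h => by simp [h, excedances] at hexc; omega
  set g : ℕ → R := fun t => (((-1) ^ t * #(factorizations σ t) : ℤ) : R) * involutionProd e σ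
  have hg0 : g 0 = 0 := by simp [g, card_factorizations_zero, hσ1]
  have hsupp : Set.Ici 1 ∩ Function.support g ⊆ ↑((range (p + 1)).erase 0) := by
    rintro t ⟨ht1, htg⟩
    rw [coe_erase, coe_range, Set.mem_sdiff, Set.mem_Iio]
    refine ⟨Nat.lt_succ_of_le <| not_lt.1 fun hpt => htg ?_, fun ht0 => by simp_all⟩
    simp [g, card_factorizations_eq_zero (hexc ▸ hpt : #(excedances σ) < t)]
  rw [finsum_mem_congr rfl fun t _ => sum_factorizations_involutionProd e σ t,
    finsum_mem_eq_sum_of_subset g hsupp fun t ht =>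
      Nat.one_le_iff_ne_zero.2 (ne_of_mem_erase ht),
    sum_erase _ hg0, ← sum_mul, ← Int.cast_sum,
    sum_range_neg_one_pow_mul_card_factorizations hσ' (by omega), hexc]
  push_cast
  rfl
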